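/- arXiv:2409.07384 — 5 statements merged into one kernel-verified Lean document; each statement's English description precedes it below -/
import Mathlib

section
/- Let p^+, p^-, δ, u_b, r_t be positive reals and K_p = (p^- + δ)/p^+. Let r : [0, ∞) → (0, ∞) be differentiable with r(0) = r_t, and suppose that for every u ≥ 0 there exists β(u) ≥ 0 such that r′(u) = −(α(u)·r(u)) / (1 + β(u)·u + u_b/(δ·(K_p + r(u)))), where α(u) = p^+/(δ·(δ + p^- + p^+·r(u))). Then for all u ≥ 0, r(u) ≥ r_t / exp(u/u_b). (This is Theorem 1: the free RBP-AD level under the buffering controller with high gain u_b is robust to the total guide-RNA load u_t.) -/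
/-- Theorem 1: the free RBP-AD level under the buffering controller
satisfies `r(u) ≥ r_t / exp(u/u_b)` for all loads `u ≥ 0`. -/
theorem stmt_6 (pp pm δ ub Kp rt : ℝ) (r : ℝ → ℝ)
    (hpp : 0 < pp) (hpm : 0 < pm) (hδ : 0 < δ) (hub : 0 < ub) (hrt : 0 < rt)
    (hKp : Kp = (pm + δ) / pp)
    (hpos : ∀ u ≥ (0:ℝ), 0 < r u) (h0 : r 0 = rt)
    (hODE : ∀ u ≥ (0:ℝ), ∃ β ≥ (0:ℝ),
      HasDerivAt r (-((pp / (δ * (δ + pm + pp * r u))) * r u) /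
        (1 + β * u + ub / (δ * (Kp + r u)))) u) :
    ∀ u ≥ (0:ℝ), r u ≥ rt / Real.exp (u / ub) := by
  have hKp' : 0 < Kp := by
    rw [hKp]; positivity
  have hppKp : pp * Kp = pm + δ := by
    rw [hKp]; field_simp
  set g : ℝ → ℝ := fun u => r u * Real.exp (u / ub) with hg
  -- derivative bound for r and nonneg derivative for g
  have key : ∀ u ≥ (0:ℝ), ∃ D : ℝ, HasDerivAt g D u ∧ 0 ≤ D := by
    intro u hu
    obtain ⟨β, hβ, hd⟩ := hODE u hu
    have hru : 0 < r u := hpos u hu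
    set ru := r u with hru'
    set D := -((pp / (δ * (δ + pm + pp * ru))) * ru) /
        (1 + β * u + ub / (δ * (Kp + ru))) with hD
    have hc : 0 < δ * (Kp + ru) := by positivity
    -- rewrite the α r term
    have hden : δ + pm + pp * ru = pp * (Kp + ru) := by ring_nf; linarith [hppKp]
    have hA : (pp / (δ * (δ + pm + pp * ru))) * ru = ru / (δ * (Kp + ru)) := by
      rw [hden]
      field_simp
    have hDn : ub / (δ * (Kp + ru)) ≤ 1 + β * u + ub / (δ * (Kp + ru)) := by
      nlinarith [mul_nonneg hβ hu]
    have hDnpos : 0 < ub / (δ * (Kp + ru)) := by positivity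
    have hbound : (ru / (δ * (Kp + ru))) / (1 + β * u + ub / (δ * (Kp + ru)))
        ≤ (ru / (δ * (Kp + ru))) / (ub / (δ * (Kp + ru))) := by
      apply div_le_div_of_nonneg_left _ hDnpos hDn
      positivity
    have heq : (ru / (δ * (Kp + ru))) / (ub / (δ * (Kp + ru))) = ru / ub := by
      field_simp
    have hDge : -(ru / ub) ≤ D := by
      rw [hD, hA, neg_div]
      linarith [heq ▸ hbound]
    -- derivative of g
    have hexp : HasDerivAt (fun u : ℝ => Real.exp (u / ub)) (Real.exp (u / ub) * (1 / ub)) u := by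
      have h1 : HasDerivAt (fun u : ℝ => u / ub) (1 / ub) u := by
        simpa using (hasDerivAt_id u).div_const ub
      exact (Real.hasDerivAt_exp (u / ub)).comp u h1
    have hgd : HasDerivAt g (D * Real.exp (u / ub) + ru * (Real.exp (u / ub) * (1 / ub))) u :=
      hd.mul hexp
    refine ⟨_, hgd, ?_⟩
    have hepos : 0 < Real.exp (u / ub) := Real.exp_pos _
    have : -(ru / ub) * Real.exp (u / ub) ≤ D * Real.exp (u / ub) :=
      mul_le_mul_of_nonneg_right hDge hepos.le
    have h2 : -(ru / ub) * Real.exp (u / ub) + ru * (Real.exp (u / ub) * (1 / ub)) = 0 := by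
      ring
    linarith
  -- g is monotone on [0, ∞)
  have hmono : MonotoneOn g (Set.Ici 0) := by
    have hcont : ContinuousOn g (Set.Ici 0) := fun u hu => by
      obtain ⟨D, hd, _⟩ := key u hu
      exact hd.continuousAt.continuousWithinAt
    apply monotoneOn_of_deriv_nonneg (convex_Ici 0) hcont
    · intro u hu
      rw [interior_Ici] at hu
      obtain ⟨D, hd, _⟩ := key u (le_of_lt hu)
      exact hd.differentiableAt.differentiableWithinAt
    · intro u hu
      rw [interior_Ici] at hu
      obtain ⟨D, hd, hD⟩ := key u (le_of_lt hu)
      rw [hd.deriv]; exact hD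
  intro u hu
  have h01 : g 0 ≤ g u := hmono (Set.self_mem_Ici) hu hu
  have hg0 : g 0 = rt := by simp [hg, h0]
  have hgu : g u = r u * Real.exp (u / ub) := rfl
  rw [ge_iff_le, div_le_iff₀ (Real.exp_pos _)]
  rw [hg0, hgu] at h01
  linarith
end

section
/- Let p^+, p^-, δ, u_b be positive reals and K_p = (p^- + δ)/p^+. Let r : [0, ∞) → (0, ∞) be differentiable such that for every u ≥ 0 there exists β(u) ≥ 0 with r′(u) = −(α(u)·r(u)) / (1 + β(u)·u + u_b/(δ·(K_p + r(u)))), where α(u) = p^+/(δ·(δ + p^- + p^+·r(u))). Then for all u ≥ 0: (i) r′(u) < 0, so r is strictly decreasing (and in particular r(u) ≤ r(0) for all u ≥ 0), and (ii) r′(u) ≥ −r(u)/u_b. -/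
/-- under the buffering-controller sensitivity ODE, `r` is strictly
decreasing (so `r(u) ≤ r(0)`) and the derivative is bounded below by `-r(u)/u_b`. -/
theorem stmt_7 (pp pm δ ub Kp : ℝ) (r : ℝ → ℝ)
    (hpp : 0 < pp) (hpm : 0 < pm) (hδ : 0 < δ) (hub : 0 < ub)
    (hKp : Kp = (pm + δ) / pp)
    (hpos : ∀ u ≥ (0:ℝ), 0 < r u)
    (hODE : ∀ u ≥ (0:ℝ), ∃ β ≥ (0:ℝ),
      HasDerivAt r (-((pp / (δ * (δ + pm + pp * r u))) * r u) /
        (1 + β * u + ub / (δ * (Kp + r u)))) u) :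
    (∀ u ≥ (0:ℝ), deriv r u < 0) ∧ StrictAntiOn r (Set.Ici 0) ∧
    (∀ u ≥ (0:ℝ), r u ≤ r 0) ∧ (∀ u ≥ (0:ℝ), deriv r u ≥ -(r u) / ub) := by
  have hKp0 : 0 < Kp := by rw [hKp]; positivity
  -- key per-point facts
  have key : ∀ u ≥ (0:ℝ), deriv r u < 0 ∧ deriv r u ≥ -(r u) / ub := by
    intro u hu
    obtain ⟨β, hβ, hd⟩ := hODE u hu
    have hr : 0 < r u := hpos u hu
    have hE : 0 < δ * (Kp + r u) := by positivity
    have hDen : 0 < 1 + β * u + ub / (δ * (Kp + r u)) := by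
      have : 0 ≤ β * u := mul_nonneg hβ hu
      have : 0 < ub / (δ * (Kp + r u)) := by positivity
      nlinarith
    have hS : 0 < δ + pm + pp * r u := by positivity
    have hN : 0 < (pp / (δ * (δ + pm + pp * r u))) * r u := by positivity
    have hderiv : deriv r u = -((pp / (δ * (δ + pm + pp * r u))) * r u) /
        (1 + β * u + ub / (δ * (Kp + r u))) := hd.deriv
    constructor
    · rw [hderiv]
      exact div_neg_of_neg_of_pos (neg_neg_of_pos hN) hDen
    · rw [hderiv, ge_iff_le, neg_div, neg_div, neg_le_neg_iff,
        div_le_div_iff₀ hDen hub]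
      -- N * ub ≤ r * D
      have hNid : (pp / (δ * (δ + pm + pp * r u))) * r u = r u / (δ * (Kp + r u)) := by
        have hS' : δ + pm + pp * r u = pp * (Kp + r u) := by
          rw [hKp]; field_simp; ring
        rw [hS']
        field_simp
      rw [hNid]
      have h1 : r u / (δ * (Kp + r u)) * ub = r u * (ub / (δ * (Kp + r u))) := by
        field_simp
      rw [h1]
      have h2 : ub / (δ * (Kp + r u)) ≤ 1 + β * u + ub / (δ * (Kp + r u)) := by
        have : 0 ≤ β * u := mul_nonneg hβ hu
        linarith
      exact mul_le_mul_of_nonneg_left h2 hr.le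
  have hderivneg : ∀ u ≥ (0:ℝ), deriv r u < 0 := fun u hu => (key u hu).1
  have hcont : ContinuousOn r (Set.Ici 0) := by
    intro u hu
    obtain ⟨β, hβ, hd⟩ := hODE u hu
    exact hd.continuousAt.continuousWithinAt
  have hanti : StrictAntiOn r (Set.Ici 0) := by
    apply strictAntiOn_of_deriv_neg (convex_Ici 0) hcont
    intro u hu
    rw [interior_Ici] at hu
    exact hderivneg u (le_of_lt hu)
  refine ⟨hderivneg, hanti, ?_, fun u hu => (key u hu).2⟩
  intro u hu
  rcases eq_or_lt_of_le hu with h | h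
  · rw [← h]
  · exact (hanti (Set.self_mem_Ici) (Set.mem_Ici.mpr hu) h).le
end

section
/- Let p^+, p^-, δ, u_b be positive reals, K_p = (p^- + δ)/p^+, r > 0, u_t ≥ 0 and β ≥ 0. Define α = p^+/(δ·(δ + p^- + p^+·r)). Then the relative sensitivity S = α / (1 + β·u_t + u_b/(δ·(K_p + r))) satisfies S ≤ 1/u_b. In particular, for fixed r bounded away from 0, S → 0 as u_b → ∞. -/
/-! The identity `δ + p⁻ + p⁺ r = p⁺ (K_p + r)` turns `α` into `1 / D` with `D = δ (K_p + r) > 0`,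
and then `S = (1 / D) / (1 + β u_t + u_b / D) = 1 / ((1 + β u_t) D + u_b)`, which is at most `1 / u_b`
and tends to `0` as `u_b → ∞`. -/

open Filter Topology

lemma div_mul_add_eq_one_div_mul_add {pp pm δ r : ℝ} (hpp : pp ≠ 0) :
    pp / (δ * (δ + pm + pp * r)) = 1 / (δ * ((pm + δ) / pp + r)) := by
  rw [div_add' _ _ _ hpp, mul_div_assoc', div_div_eq_mul_div, one_mul, add_comm pm δ]
  ring

lemma one_div_div_add_div {D c u : ℝ} (hD : D ≠ 0) :
    (1 / D) / (c + u / D) = 1 / (c * D + u) := by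
  rw [add_div' _ _ _ hD, div_div_div_cancel_right₀ hD]

lemma tendsto_one_div_const_add_atTop (c : ℝ) :
    Tendsto (fun u : ℝ => 1 / (c + u)) atTop (𝓝 0) := by
  simp only [one_div]
  exact (tendsto_atTop_add_const_left atTop c tendsto_id).inv_tendsto_atTop

/-- the relative sensitivity of the buffering controller is at most
`1/u_b`, and tends to `0` as `u_b → ∞`. -/
theorem stmt_8 (pp pm δ ub Kp r ut β : ℝ)
    (hpp : 0 < pp) (hpm : 0 < pm) (hδ : 0 < δ) (hub : 0 < ub)
    (hKp : Kp = (pm + δ) / pp) (hr : 0 < r) (hut : 0 ≤ ut) (hβ : 0 ≤ β) :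
    (pp / (δ * (δ + pm + pp * r))) / (1 + β * ut + ub / (δ * (Kp + r))) ≤ 1 / ub ∧
    Filter.Tendsto (fun ub' : ℝ =>
        (pp / (δ * (δ + pm + pp * r))) / (1 + β * ut + ub' / (δ * (Kp + r))))
      Filter.atTop (nhds 0) := by
  have hD : 0 < δ * (Kp + r) := by rw [hKp]; positivity
  have hS : ∀ u, (pp / (δ * (δ + pm + pp * r))) / (1 + β * ut + u / (δ * (Kp + r))) =
      1 / ((1 + β * ut) * (δ * (Kp + r)) + u) := fun u => by
    rw [div_mul_add_eq_one_div_mul_add hpp.ne', ← hKp, one_div_div_add_div hD.ne']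
  simp only [hS]
  refine ⟨one_div_le_one_div_of_le hub (le_add_of_nonneg_left (by positivity)), ?_⟩
  exact tendsto_one_div_const_add_atTop _
end

section
/- Let K_p, u_0, r_t be positive real numbers. The function y : [0, ∞) → ℝ defined by y(u) = (r_t·K_p) / ((r_t + K_p)·exp(u/u_0) − r_t) is positive on [0, ∞), satisfies y(0) = r_t, and satisfies the differential equation y′(u) = −(y(u)·(K_p + y(u)))/(K_p·u_0) for all u ≥ 0. -/
/-!
The equation `y' = -y (K + y) / (K τ)` is of Bernoulli type: the reciprocal `z = 1 / y` solves the
affine equation `z' = (z + 1 / K) / τ`, whose solution with `z 0 = 1 / r` is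
`(1 / r + 1 / K) exp (u / τ) - 1 / K`. Its reciprocal is the given `y`, and `z` stays positive for
`u ≥ 0` because the exponential is at least one there.
-/

open Real

/-- The solution of `z' = (z + K⁻¹) / τ` with `z 0 = a`. -/
noncomputable def affineExpSolution (a K τ u : ℝ) : ℝ :=
  (a + K⁻¹) * exp (u / τ) - K⁻¹

section

variable {a K τ : ℝ}

theorem affineExpSolution_zero : affineExpSolution a K τ 0 = a := by
  simp [affineExpSolution]

theorem hasDerivAt_affineExpSolution (u : ℝ) :
    HasDerivAt (affineExpSolution a K τ) ((affineExpSolution a K τ u + K⁻¹) / τ) u := by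
  refine ((((hasDerivAt_id u).div_const τ).exp.const_mul (a + K⁻¹)).sub_const K⁻¹).congr_deriv ?_
  simp only [affineExpSolution, id]
  ring

theorem affineExpSolution_pos (ha : 0 < a) (hK : 0 < K) (hτ : 0 < τ) {u : ℝ} (hu : 0 ≤ u) :
    0 < affineExpSolution a K τ u := by
  have hexp : 1 ≤ exp (u / τ) := one_le_exp (div_nonneg hu hτ.le)
  have hK' : 0 < K⁻¹ := inv_pos.mpr hK
  unfold affineExpSolution
  nlinarith

theorem affineExpSolution_inv_left {r : ℝ} (hr : r ≠ 0) (hK : K ≠ 0) (u : ℝ) :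
    affineExpSolution r⁻¹ K τ u = ((r + K) * exp (u / τ) - r) / (r * K) := by
  unfold affineExpSolution
  field_simp
  ring

end

theorem HasDerivAt.inv_of_affine_ode {z : ℝ → ℝ} {K τ u : ℝ}
    (hz : HasDerivAt z ((z u + K⁻¹) / τ) u) (hz0 : z u ≠ 0) (hK : K ≠ 0) :
    HasDerivAt (fun v => (z v)⁻¹) (-((z u)⁻¹ * (K + (z u)⁻¹)) / (K * τ)) u := by
  refine (hz.inv hz0).congr_deriv ?_
  field_simp

/-- explicit solution of the comparison ODE for the feedback controller. -/
theorem stmt_9 (Kp u0 rt : ℝ) (hKp : 0 < Kp) (hu0 : 0 < u0) (hrt : 0 < rt) :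
    let y : ℝ → ℝ := fun u => rt * Kp / ((rt + Kp) * Real.exp (u / u0) - rt)
    (∀ u ≥ (0:ℝ), 0 < y u) ∧ y 0 = rt ∧
    (∀ u ≥ (0:ℝ), HasDerivAt y (-(y u * (Kp + y u)) / (Kp * u0)) u) := by
  intro y
  set z := affineExpSolution rt⁻¹ Kp u0
  have hy : y = fun u => (z u)⁻¹ := by
    funext u
    simp only [z]
    rw [affineExpSolution_inv_left hrt.ne' hKp.ne', inv_div]
  have hz_pos : ∀ u ≥ (0:ℝ), 0 < z u := fun u hu =>
    affineExpSolution_pos (inv_pos.mpr hrt) hKp hu0 hu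
  rw [hy]
  refine ⟨fun u hu => inv_pos.mpr (hz_pos u hu), by simp [z, affineExpSolution_zero], fun u hu => ?_⟩
  exact (hasDerivAt_affineExpSolution u).inv_of_affine_ode (hz_pos u hu).ne' hKp.ne'
end

section
/- Let K_p, u_0, r_t be positive reals and let r : [0, ∞) → (0, ∞) be differentiable with r(0) = r_t and r′(u) ≥ −(r(u)·(K_p + r(u)))/(K_p·u_0) for all u ≥ 0. Then for all u ≥ 0, r(u) ≥ (r_t·K_p) / ((r_t + K_p)·exp(u/u_0) − r_t). -/
/-!
The substitution `w = 1 / r` linearizes the Riccati inequality: it becomes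
`(w + 1 / Kp)' ≤ (w + 1 / Kp) / u0`, so by Grönwall `w u + 1 / Kp ≤ (1 / rt + 1 / Kp) exp (u / u0)`,
which, solved for `r u`, is the claimed bound.
-/

open Real Set

theorem le_mul_exp_of_hasDerivAt_le_mul {f f' : ℝ → ℝ} {K a : ℝ}
    (hf : ∀ x ≥ a, HasDerivAt f (f' x) x) (bound : ∀ x ≥ a, f' x ≤ K * f x) :
    ∀ x ≥ a, f x ≤ f a * exp (K * (x - a)) := by
  intro x hx
  have hcont : ContinuousOn f (Icc a x) := fun y hy =>
    (hf y hy.1).continuousAt.continuousWithinAt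
  have hgronwall := le_gronwallBound_of_liminf_deriv_right_le (ε := 0) hcont
    (fun y hy _ hlt => (hf y hy.1).hasDerivWithinAt.liminf_right_slope_le hlt) le_rfl
    (fun y hy => (add_zero (K * f y)).symm ▸ bound y hy.1) x ⟨hx, le_rfl⟩
  rwa [gronwallBound_ε0] at hgronwall

theorem inv_deriv_le_of_riccati_lower_bound {Kp u0 r r' : ℝ}
    (hKp : 0 < Kp) (hu0 : 0 < u0) (hr : 0 < r)
    (hr' : -(r * (Kp + r)) / (Kp * u0) ≤ r') :
    -r' / r ^ 2 ≤ u0⁻¹ * (r⁻¹ + Kp⁻¹) := by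
  have hr'' : -(r * (Kp + r)) ≤ r' * (Kp * u0) := (div_le_iff₀ (by positivity)).mp hr'
  rw [div_le_iff₀ (by positivity)]
  field_simp
  nlinarith

theorem div_le_of_inv_add_inv_le {Kp rt r E : ℝ}
    (hKp : 0 < Kp) (hrt : 0 < rt) (hr : 0 < r) (hE : 1 ≤ E)
    (h : r⁻¹ + Kp⁻¹ ≤ (rt⁻¹ + Kp⁻¹) * E) :
    rt * Kp / ((rt + Kp) * E - rt) ≤ r := by
  have hden : 0 < (rt + Kp) * E - rt := by nlinarith
  have h' : r⁻¹ ≤ ((rt + Kp) * E - rt) / (rt * Kp) := by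
    convert sub_le_sub_right h Kp⁻¹ using 1 <;> field_simp <;> ring
  rw [div_le_iff₀ hden]
  rw [inv_le_iff_one_le_mul₀' hr, mul_div_assoc', one_le_div (by positivity)] at h'
  linarith

/-- comparison lemma for the Riccati-type lower-bound ODE. -/
theorem stmt_10 (Kp u0 rt : ℝ) (r : ℝ → ℝ)
    (hKp : 0 < Kp) (hu0 : 0 < u0) (hrt : 0 < rt)
    (hpos : ∀ u ≥ (0:ℝ), 0 < r u) (h0 : r 0 = rt)
    (hdiff : ∀ u ≥ (0:ℝ), DifferentiableAt ℝ r u)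
    (hineq : ∀ u ≥ (0:ℝ), deriv r u ≥ -(r u * (Kp + r u)) / (Kp * u0)) :
    ∀ u ≥ (0:ℝ), r u ≥ rt * Kp / ((rt + Kp) * Real.exp (u / u0) - rt) := by
  have hw : ∀ u ≥ (0:ℝ), HasDerivAt (fun x => (r x)⁻¹ + Kp⁻¹) (-deriv r u / r u ^ 2) u :=
    fun u hu => ((hdiff u hu).hasDerivAt.inv (hpos u hu).ne').add_const _
  have hgronwall := le_mul_exp_of_hasDerivAt_le_mul hw fun u hu =>
    inv_deriv_le_of_riccati_lower_bound hKp hu0 (hpos u hu) (hineq u hu)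
  intro u hu
  refine div_le_of_inv_add_inv_le hKp hrt (hpos u hu) (one_le_exp (by positivity)) ?_
  simpa [h0, div_eq_inv_mul] using hgronwall u hu
end
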